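/- For every rational number u, setting a = u² − 3, p = u·(u² − 3), q = 2·(u² − 1), r = u·(u² − 1), s = 2, one has (p + q)⁴ + a·(r − s)⁴ = (p − q)⁴ + a·(r + s)⁴. -/

import Mathlib

/-!
Since `(x + y)⁴ - (x - y)⁴ = 8xy(x² + y²)`, the equation `(p + q)⁴ + a(r - s)⁴ = (p - q)⁴ + a(r + s)⁴`
reduces to `pq(p² + q²) = a·rs(r² + s²)`. For the parametrization, `pq = a·rs` is immediate, and
`p² + q² = r² + s²` because both equal `u⁶ - 2u⁴ + u² + 4`.
-/

section

variable {R : Type*} [CommRing R]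

theorem add_pow_four_sub_sub_pow_four (x y : R) :
    (x + y) ^ 4 - (x - y) ^ 4 = 8 * x * y * (x ^ 2 + y ^ 2) := by
  ring

theorem add_pow_four_add_mul_sub_pow_four_eq {a p q r s : R}
    (h : p * q * (p ^ 2 + q ^ 2) = a * (r * s * (r ^ 2 + s ^ 2))) :
    (p + q) ^ 4 + a * (r - s) ^ 4 = (p - q) ^ 4 + a * (r + s) ^ 4 := by
  linear_combination
    add_pow_four_sub_sub_pow_four p q - a * add_pow_four_sub_sub_pow_four r s + 8 * h

theorem sq_add_sq_shifted_param (u : R) :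
    (u * (u ^ 2 - 3)) ^ 2 + (2 * (u ^ 2 - 1)) ^ 2 = (u * (u ^ 2 - 1)) ^ 2 + 2 ^ 2 := by
  ring

end

theorem stmt_10 (u : ℚ) (a p q r s : ℚ)
    (ha : a = u ^ 2 - 3) (hp : p = u * (u ^ 2 - 3)) (hq : q = 2 * (u ^ 2 - 1))
    (hr : r = u * (u ^ 2 - 1)) (hs : s = 2) :
    (p + q) ^ 4 + a * (r - s) ^ 4 = (p - q) ^ 4 + a * (r + s) ^ 4 := by
  subst ha hp hq hr hs
  apply add_pow_four_add_mul_sub_pow_four_eq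
  rw [sq_add_sq_shifted_param]
  ring
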